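/- arXiv:2409.08382 — 5 statements merged into one kernel-verified Lean document; each statement's English description precedes it below -/
import Mathlib

section
/- Suppose there exist constants M > 0 and λ > 0 such that for every x ∈ ℝⁿ there is a control sequence u_x : ℕ → ℝᵐ satisfying R − r(Ψ(k, x, u_x), u_x(k)) ≤ M‖x‖² e^{−λk} for all k ≥ 0 (exponential stabilizability). Then for every discount factor γ ∈ (0,1) and every x ∈ ℝⁿ, R/(1−γ) − V_γ(x) ≤ (M/(1−e^{−λ})) ‖x‖². -/
set_option autoImplicit false

open scoped Matrix

noncomputable section

/-- The flow map of the discrete control system `x_{k+1} = f(x_k, u_k)`. -/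
def flow {X U : Type*} (f : X → U → X) (x₀ : X) (u : ℕ → U) : ℕ → X
  | 0 => x₀
  | k + 1 => f (flow f x₀ u k) (u k)

/-- The `γ`-discounted objective `J_γ^u(x₀) = Σ_k γ^k r(Ψ(k,x₀,u), u(k))`. -/
def Jobj {X U : Type*} (f : X → U → X) (r : X → U → ℝ) (γ : ℝ) (x : X) (u : ℕ → U) : ℝ :=
  ∑' k : ℕ, γ ^ k * r (flow f x u k) (u k)

/-- The optimal value function `V_γ(x) = sup_u J_γ^u(x)`, the supremum taken over
control sequences for which the discounted objective is well defined. -/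
def Vopt {X U : Type*} (f : X → U → X) (r : X → U → ℝ) (γ : ℝ) (x : X) : ℝ :=
  ⨆ u : {u : ℕ → U // Summable fun k : ℕ => γ ^ k * r (flow f x u k) (u k)},
    Jobj f r γ x u.1

/-! Since `r ≤ R`, every discounted objective is at most `R / (1 - γ)`, so `V_γ(x)` is a
genuine supremum and dominates the objective of the stabilizing control `u_x`. For that
control `R / (1 - γ) - J_γ^{u_x}(x) = Σ γᵏ (R - r(Ψ(k, x, u_x), u_x(k)))`, and discounting
only shrinks the nonnegative deficits, which are bounded by the geometric series
`Σ M‖x‖² (e^{-λ})ᵏ`. -/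

section DiscountedSums

variable {γ R : ℝ}

theorem hasSum_pow_mul_const (hγ₀ : 0 ≤ γ) (hγ₁ : γ < 1) :
    HasSum (fun k : ℕ => γ ^ k * R) (R / (1 - γ)) := by
  simpa [div_eq_inv_mul] using (hasSum_geometric_of_lt_one hγ₀ hγ₁).mul_right R

theorem hasSum_pow_mul_of_summable_deficit {a : ℕ → ℝ} (hγ₀ : 0 ≤ γ) (hγ₁ : γ < 1)
    (hd : Summable fun k : ℕ => γ ^ k * (R - a k)) :
    HasSum (fun k : ℕ => γ ^ k * a k) (R / (1 - γ) - ∑' k : ℕ, γ ^ k * (R - a k)) := by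
  simpa only [← mul_sub, sub_sub_cancel] using
    (hasSum_pow_mul_const (R := R) hγ₀ hγ₁).sub hd.hasSum

theorem summable_and_tsum_pow_mul_le_of_le_geometric {d : ℕ → ℝ} {C ρ : ℝ}
    (hγ₀ : 0 ≤ γ) (hγ₁ : γ ≤ 1) (hρ₀ : 0 ≤ ρ) (hρ₁ : ρ < 1)
    (hd₀ : ∀ k, 0 ≤ d k) (hd : ∀ k, d k ≤ C * ρ ^ k) :
    Summable (fun k : ℕ => γ ^ k * d k) ∧ ∑' k : ℕ, γ ^ k * d k ≤ C / (1 - ρ) := by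
  have hgeom : HasSum (fun k : ℕ => C * ρ ^ k) (C / (1 - ρ)) :=
    (hasSum_geometric_of_lt_one hρ₀ hρ₁).mul_left C
  have hle : ∀ k : ℕ, γ ^ k * d k ≤ C * ρ ^ k := fun k =>
    (mul_le_of_le_one_left (hd₀ k) (pow_le_one₀ hγ₀ hγ₁)).trans (hd k)
  have hsum : Summable fun k : ℕ => γ ^ k * d k :=
    hgeom.summable.of_nonneg_of_le (fun k => mul_nonneg (pow_nonneg hγ₀ k) (hd₀ k)) hle
  exact ⟨hsum, hasSum_le hle hsum.hasSum hgeom⟩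

end DiscountedSums

section ValueFunction

variable {X U : Type*} {f : X → U → X} {r : X → U → ℝ} {R γ : ℝ}

theorem Jobj_le_div_one_sub (hr : ∀ x v, r x v ≤ R) (hγ₀ : 0 ≤ γ) (hγ₁ : γ < 1)
    {x : X} {u : ℕ → U} (hu : Summable fun k : ℕ => γ ^ k * r (flow f x u k) (u k)) :
    Jobj f r γ x u ≤ R / (1 - γ) :=
  hasSum_le (fun k => mul_le_mul_of_nonneg_left (hr _ _) (pow_nonneg hγ₀ k)) hu.hasSum
    (hasSum_pow_mul_const hγ₀ hγ₁)

theorem Jobj_le_Vopt (hr : ∀ x v, r x v ≤ R) (hγ₀ : 0 ≤ γ) (hγ₁ : γ < 1)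
    {x : X} {u : ℕ → U} (hu : Summable fun k : ℕ => γ ^ k * r (flow f x u k) (u k)) :
    Jobj f r γ x u ≤ Vopt f r γ x :=
  le_ciSup
    (f := fun v : {v : ℕ → U // Summable fun k : ℕ => γ ^ k * r (flow f x v k) (v k)} =>
      Jobj f r γ x v.1)
    ⟨R / (1 - γ), by rintro _ ⟨v, rfl⟩; exact Jobj_le_div_one_sub hr hγ₀ hγ₁ v.2⟩
    ⟨u, hu⟩

theorem div_one_sub_sub_Vopt_le (hr : ∀ x v, r x v ≤ R) (hγ₀ : 0 ≤ γ) (hγ₁ : γ < 1)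
    {C ρ : ℝ} (hρ₀ : 0 ≤ ρ) (hρ₁ : ρ < 1) {x : X} {u : ℕ → U}
    (hu : ∀ k, R - r (flow f x u k) (u k) ≤ C * ρ ^ k) :
    R / (1 - γ) - Vopt f r γ x ≤ C / (1 - ρ) := by
  obtain ⟨hdeficit, hdeficit_le⟩ := summable_and_tsum_pow_mul_le_of_le_geometric
    hγ₀ hγ₁.le hρ₀ hρ₁ (fun k => sub_nonneg.2 (hr _ _)) hu
  have hJ := hasSum_pow_mul_of_summable_deficit hγ₀ hγ₁ hdeficit
  have hV : Jobj f r γ x u ≤ Vopt f r γ x := Jobj_le_Vopt hr hγ₀ hγ₁ hJ.summable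
  rw [Jobj, hJ.tsum_eq] at hV
  linarith

end ValueFunction

theorem exponential_stabilizability_value_bound_general
    {n m : ℕ}
    (f : EuclideanSpace ℝ (Fin n) → EuclideanSpace ℝ (Fin m) → EuclideanSpace ℝ (Fin n))
    (Q : Matrix (Fin n) (Fin n) ℝ) (hQ : Q.PosDef)
    (R : ℝ)
    (r : EuclideanSpace ℝ (Fin n) → EuclideanSpace ℝ (Fin m) → ℝ)
    (hr : ∀ x u, r x u = R - x ⬝ᵥ Q.mulVec x)
    (M lam : ℝ) (hlam : 0 < lam)
    (hstab : ∀ x : EuclideanSpace ℝ (Fin n), ∃ u : ℕ → EuclideanSpace ℝ (Fin m),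
      ∀ k : ℕ, R - r (flow f x u k) (u k) ≤ M * ‖x‖ ^ 2 * Real.exp (-lam * k))
    (γ : ℝ) (hγ : γ ∈ Set.Ioo (0 : ℝ) 1) (x : EuclideanSpace ℝ (Fin n)) :
    R / (1 - γ) - Vopt f r γ x ≤ (M / (1 - Real.exp (-lam))) * ‖x‖ ^ 2 := by
  obtain ⟨hγ₀, hγ₁⟩ := hγ
  have hr_le : ∀ y v, r y v ≤ R := fun y v => by
    simpa [hr] using hQ.posSemidef.dotProduct_mulVec_nonneg y
  have hρ₁ : Real.exp (-lam) < 1 := Real.exp_lt_one_iff.2 (neg_neg_iff_pos.2 hlam)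
  obtain ⟨u, hu⟩ := hstab x
  have hu' : ∀ k : ℕ, R - r (flow f x u k) (u k) ≤ M * ‖x‖ ^ 2 * Real.exp (-lam) ^ k :=
    fun k => by simpa [← Real.exp_nat_mul, mul_comm] using hu k
  calc R / (1 - γ) - Vopt f r γ x ≤ M * ‖x‖ ^ 2 / (1 - Real.exp (-lam)) :=
        div_one_sub_sub_Vopt_le hr_le hγ₀.le hγ₁ (Real.exp_pos _).le hρ₁ hu'
    _ = M / (1 - Real.exp (-lam)) * ‖x‖ ^ 2 := by ring

/-- If the system is exponentially stabilizable
(`R − r(Ψ(k,x,u_x), u_x(k)) ≤ M‖x‖² e^{−λk}`), then for every discount factor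
`γ ∈ (0,1)` and every state `x`, `R/(1−γ) − V_γ(x) ≤ (M/(1−e^{−λ}))‖x‖²`. -/
theorem exponential_stabilizability_value_bound
    {n m : ℕ}
    (f : EuclideanSpace ℝ (Fin n) → EuclideanSpace ℝ (Fin m) → EuclideanSpace ℝ (Fin n))
    (Q : Matrix (Fin n) (Fin n) ℝ) (hQ : Q.PosDef)
    (R : ℝ) (hR : 0 < R)
    (r : EuclideanSpace ℝ (Fin n) → EuclideanSpace ℝ (Fin m) → ℝ)
    (hr : ∀ x u, r x u = R - x ⬝ᵥ Q.mulVec x)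
    (M lam : ℝ) (hM : 0 < M) (hlam : 0 < lam)
    (hstab : ∀ x : EuclideanSpace ℝ (Fin n), ∃ u : ℕ → EuclideanSpace ℝ (Fin m),
      ∀ k : ℕ, R - r (flow f x u k) (u k) ≤ M * ‖x‖ ^ 2 * Real.exp (-lam * k))
    (γ : ℝ) (hγ : γ ∈ Set.Ioo (0 : ℝ) 1) (x : EuclideanSpace ℝ (Fin n)) :
    R / (1 - γ) - Vopt f r γ x ≤ (M / (1 - Real.exp (-lam))) * ‖x‖ ^ 2 :=
  exponential_stabilizability_value_bound_general f Q hQ R r hr M lam hlam hstab γ hγ x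
end
end

section
/- Assume: (i) for each x ∈ ℝⁿ there is an optimal control sequence u⋆_x attaining V_γ(x) and satisfying the dynamic-programming identity V_γ(x) = r(x, u⋆_x(0)) + γ V_γ(f(x, u⋆_x(0))); (ii) there is a constant a_V > 0 such that R/(1−γ) − V_γ(x) ≤ a_V ‖x‖² for all x ∈ ℝⁿ and all γ ∈ (0,1). Set γ⋆ = a_V/(a_V + λ_min(Q)). Then for every γ ∈ (γ⋆, 1), the constant c = λ_min(Q) − ((1−γ)/γ) a_V is strictly positive and, for every x ∈ ℝⁿ with next state y = f(x, u⋆_x(0)), one has V_γ(x) − V_γ(y) ≤ −c‖x‖². -/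
set_option autoImplicit false

open scoped Matrix

noncomputable section

/-! By the dynamic-programming identity, `γ (V(x) - V(y)) = R - (1 - γ) V(x) - xᵀQx`. The quadratic
bound on `R/(1-γ) - V` bounds `R - (1 - γ) V(x)` by `(1 - γ) a_V ‖x‖²`, and the Rayleigh bound
`xᵀQx ≥ λ_min ‖x‖²` makes the right-hand side at most `-γ c ‖x‖²`. -/

namespace Matrix.IsHermitian

variable {n : Type*} [Fintype n] [DecidableEq n] {A : Matrix n n ℝ}

open scoped Pointwise in
theorem posSemidef_sub_smul_one (hA : A.IsHermitian) {c : ℝ} (hc : ∀ i, c ≤ hA.eigenvalues i) :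
    (A - c • 1).PosSemidef := by
  have hB : (A - c • 1).IsHermitian := hA.sub (isHermitian_one.smul (IsSelfAdjoint.all c))
  refine hB.posSemidef_iff_eigenvalues_nonneg.mpr fun i => ?_
  have hmem : hB.eigenvalues i ∈ spectrum ℝ A - ({c} : Set ℝ) := by
    rw [spectrum.sub_singleton_eq, Algebra.algebraMap_eq_smul_one]
    exact hB.eigenvalues_mem_spectrum_real i
  rw [hA.spectrum_real_eq_range_eigenvalues] at hmem
  obtain ⟨_, ⟨j, rfl⟩, _, rfl, hj⟩ := hmem
  simpa [← hj] using hc j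

theorem mul_dotProduct_self_le (hA : A.IsHermitian) {c : ℝ} (hc : ∀ i, c ≤ hA.eigenvalues i)
    (x : n → ℝ) : c * (x ⬝ᵥ x) ≤ x ⬝ᵥ A *ᵥ x := by
  have := (hA.posSemidef_sub_smul_one hc).dotProduct_mulVec_nonneg x
  rw [star_trivial, sub_mulVec, smul_mulVec, one_mulVec, dotProduct_sub, dotProduct_smul,
    smul_eq_mul] at this
  linarith

end Matrix.IsHermitian

theorem EuclideanSpace.norm_sq_eq_dotProduct {n : Type*} [Fintype n] (x : EuclideanSpace ℝ n) :
    ‖x‖ ^ 2 = x ⬝ᵥ x := by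
  rw [← real_inner_self_eq_norm_sq, EuclideanSpace.inner_eq_star_dotProduct, star_trivial]

theorem one_step_value_decrease {γ R a lam q s Vx Vy : ℝ} (hγ : γ ∈ Set.Ioo 0 1)
    (hDP : Vx = R - q + γ * Vy) (hbound : R / (1 - γ) - Vx ≤ a * s) (hq₀ : 0 ≤ lam * s)
    (hq : lam * s ≤ q) :
    Vx - Vy ≤ -(lam - ((1 - γ) / γ) * a) * s := by
  obtain ⟨hγ0, hγ1⟩ := hγ
  have hR : R ≤ (1 - γ) * (Vx + a * s) := by
    rw [← div_le_iff₀' (sub_pos.mpr hγ1)]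
    linarith
  have hdiscount : γ * (lam * s) ≤ lam * s := mul_le_of_le_one_left hq₀ hγ1.le
  rw [← mul_le_mul_iff_right₀ hγ0]
  calc γ * (Vx - Vy) ≤ (1 - γ) * a * s - q := by linear_combination hR + hDP
    _ ≤ (1 - γ) * a * s - γ * (lam * s) := by linarith
    _ = γ * (-(lam - ((1 - γ) / γ) * a) * s) := by field_simp; ring

theorem sub_div_mul_pos_of_div_add_lt {γ a lam : ℝ} (hlam : 0 < lam) (ha : 0 ≤ a)
    (hγ : a / (a + lam) < γ) : 0 < lam - ((1 - γ) / γ) * a := by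
  have hγ0 : 0 < γ := (div_nonneg ha (by linarith)).trans_lt hγ
  have hlt : a < γ * (a + lam) := (div_lt_iff₀ (by linarith)).mp hγ
  rw [sub_pos, div_mul_eq_mul_div, div_lt_iff₀ hγ0]
  linarith

theorem value_decrease_along_optimal_step_general
    {n m : ℕ}
    (f : EuclideanSpace ℝ (Fin n) → EuclideanSpace ℝ (Fin m) → EuclideanSpace ℝ (Fin n))
    (Q : Matrix (Fin n) (Fin n) ℝ) (hQ : Q.PosDef)
    (R : ℝ)
    (r : EuclideanSpace ℝ (Fin n) → EuclideanSpace ℝ (Fin m) → ℝ)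
    (hr : ∀ x u, r x u = R - x ⬝ᵥ Q.mulVec x)
    (lamMin : ℝ) (hlamMin : IsLeast (Set.range hQ.isHermitian.eigenvalues) lamMin)
    (aV : ℝ) (haV : 0 < aV)
    -- (ii): quadratic upper bound for all states and all discount factors
    (hbound : ∀ γ' ∈ Set.Ioo (0 : ℝ) 1, ∀ x : EuclideanSpace ℝ (Fin n),
      R / (1 - γ') - Vopt f r γ' x ≤ aV * ‖x‖ ^ 2)
    (γ : ℝ) (hγ : γ ∈ Set.Ioo (aV / (aV + lamMin)) 1)
    -- (i): an optimal control sequence `u⋆_x` attaining `V_γ(x)` and satisfying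
    -- the dynamic-programming identity
    (ustar : EuclideanSpace ℝ (Fin n) → ℕ → EuclideanSpace ℝ (Fin m))
    (hDP : ∀ x, Vopt f r γ x
      = r x (ustar x 0) + γ * Vopt f r γ (f x (ustar x 0))) :
    0 < lamMin - ((1 - γ) / γ) * aV ∧
      ∀ x : EuclideanSpace ℝ (Fin n),
        Vopt f r γ x - Vopt f r γ (f x (ustar x 0))
          ≤ -(lamMin - ((1 - γ) / γ) * aV) * ‖x‖ ^ 2 := by
  have hlam : 0 < lamMin := by
    obtain ⟨i, rfl⟩ := hlamMin.1
    exact hQ.eigenvalues_pos i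
  have hγ' : γ ∈ Set.Ioo 0 1 := ⟨(div_nonneg haV.le (by linarith)).trans_lt hγ.1, hγ.2⟩
  refine ⟨sub_div_mul_pos_of_div_add_lt hlam haV.le hγ.1, fun x => ?_⟩
  have hquad : lamMin * ‖x‖ ^ 2 ≤ x ⬝ᵥ Q *ᵥ x := by
    rw [EuclideanSpace.norm_sq_eq_dotProduct]
    exact hQ.isHermitian.mul_dotProduct_self_le (fun i => hlamMin.2 ⟨i, rfl⟩) x
  exact one_step_value_decrease hγ' (hr x (ustar x 0) ▸ hDP x) (hbound γ hγ' x)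
    (by positivity) hquad

/-- Under attainment of the optimum, the dynamic-programming identity, and the
quadratic upper bound `R/(1−γ) − V_γ(x) ≤ a_V‖x‖²`, for every discount factor
`γ ∈ (γ⋆, 1)` with `γ⋆ = a_V/(a_V + λ_min(Q))` the constant
`c = λ_min(Q) − ((1−γ)/γ)a_V` is positive and `V_γ(x) − V_γ(y) ≤ −c‖x‖²`
where `y = f(x, u⋆_x(0))`. -/
theorem value_decrease_along_optimal_step
    {n m : ℕ}
    (f : EuclideanSpace ℝ (Fin n) → EuclideanSpace ℝ (Fin m) → EuclideanSpace ℝ (Fin n))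
    (Q : Matrix (Fin n) (Fin n) ℝ) (hQ : Q.PosDef)
    (R : ℝ) (hR : 0 < R)
    (r : EuclideanSpace ℝ (Fin n) → EuclideanSpace ℝ (Fin m) → ℝ)
    (hr : ∀ x u, r x u = R - x ⬝ᵥ Q.mulVec x)
    (lamMin : ℝ) (hlamMin : IsLeast (Set.range hQ.isHermitian.eigenvalues) lamMin)
    (aV : ℝ) (haV : 0 < aV)
    -- (ii): quadratic upper bound for all states and all discount factors
    (hbound : ∀ γ' ∈ Set.Ioo (0 : ℝ) 1, ∀ x : EuclideanSpace ℝ (Fin n),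
      R / (1 - γ') - Vopt f r γ' x ≤ aV * ‖x‖ ^ 2)
    (γ : ℝ) (hγ : γ ∈ Set.Ioo (aV / (aV + lamMin)) 1)
    -- (i): an optimal control sequence `u⋆_x` attaining `V_γ(x)` and satisfying
    -- the dynamic-programming identity
    (ustar : EuclideanSpace ℝ (Fin n) → ℕ → EuclideanSpace ℝ (Fin m))
    (hattain : ∀ x, Vopt f r γ x = Jobj f r γ x (ustar x))
    (hDP : ∀ x, Vopt f r γ x
      = r x (ustar x 0) + γ * Vopt f r γ (f x (ustar x 0))) :
    0 < lamMin - ((1 - γ) / γ) * aV ∧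
      ∀ x : EuclideanSpace ℝ (Fin n),
        Vopt f r γ x - Vopt f r γ (f x (ustar x 0))
          ≤ -(lamMin - ((1 - γ) / γ) * aV) * ‖x‖ ^ 2 :=
  value_decrease_along_optimal_step_general f Q hQ R r hr lamMin hlamMin aV haV hbound γ hγ ustar
    hDP
end
end

section
/- Assume: (i) for each x ∈ ℝⁿ there is an optimal control sequence u⋆_x attaining V_γ(x), and along each optimal trajectory x_{k+1} = f(x_k, u⋆(k)) the dynamic-programming identity V_γ(x_k) = r(x_k, u⋆(k)) + γ V_γ(x_{k+1}) holds for every k; (ii) there is a constant a_V > 0 such that λ_min(Q)‖x‖² ≤ R/(1−γ) − V_γ(x) ≤ a_V ‖x‖² for all x ∈ ℝⁿ; (iii) there is a constant c with 0 < c < a_V such that V_γ(x_k) − V_γ(x_{k+1}) ≤ −c‖x_k‖² along every optimal trajectory. Then, with λ = −ln(1 − c/a_V), every optimal trajectory satisfies ‖Ψ(k, x, u⋆_x)‖² ≤ (a_V/λ_min(Q)) ‖x‖² e^{−λ k} for all k ≥ 0; in particular the origin is asymptotically (indeed exponentially) stable under the optimal policy. -/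
/-! The shifted value `W(x) = R/(1-γ) - V_γ(x)` is a quadratic Lyapunov function: it is
sandwiched between `λ_min(Q)‖x‖²` and `a_V‖x‖²`, and it drops by at least `c‖x_k‖² ≥ (c/a_V) W(x_k)`
per step, so `W(x_k) ≤ (1 - c/a_V)^k W(x₀) ≤ (1 - c/a_V)^k a_V‖x₀‖²`. -/

set_option autoImplicit false

open scoped Matrix

noncomputable section

theorem le_one_sub_div_mul_of_le_sub_mul {w₀ w₁ s a c : ℝ} (ha : 0 < a) (hc : 0 ≤ c)
    (hup : w₀ ≤ a * s) (hdec : w₁ ≤ w₀ - c * s) : w₁ ≤ (1 - c / a) * w₀ := by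
  have : c / a * w₀ ≤ c * s := by
    calc c / a * w₀ ≤ c / a * (a * s) := by gcongr
      _ = c * s := by field_simp
  linarith

theorem le_div_mul_geom_of_quadratic_lyapunov {w s : ℕ → ℝ} {a b c : ℝ}
    (hb : 0 < b) (ha : 0 < a) (hc : 0 ≤ c) (hca : c ≤ a)
    (hlow : ∀ k, b * s k ≤ w k) (hup : ∀ k, w k ≤ a * s k)
    (hdec : ∀ k, w (k + 1) ≤ w k - c * s k) (k : ℕ) :
    s k ≤ a / b * s 0 * (1 - c / a) ^ k := by
  have hρ : 0 ≤ 1 - c / a := sub_nonneg.2 ((div_le_one ha).2 hca)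
  have hgeom : w k ≤ (1 - c / a) ^ k * w 0 :=
    le_geom hρ k fun j _ ↦ le_one_sub_div_mul_of_le_sub_mul ha hc (hup j) (hdec j)
  rw [div_mul_eq_mul_div, div_mul_eq_mul_div, le_div_iff₀ hb]
  calc s k * b ≤ w k := by linarith [hlow k]
    _ ≤ (1 - c / a) ^ k * (a * s 0) := hgeom.trans (by gcongr; exact hup 0)
    _ = a * s 0 * (1 - c / a) ^ k := by ring

theorem Real.exp_neg_neg_log_mul_natCast {ρ : ℝ} (hρ : 0 < ρ) (k : ℕ) :
    Real.exp (-(-Real.log ρ) * k) = ρ ^ k := by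
  rw [neg_neg, ← Real.rpow_def_of_pos hρ, Real.rpow_natCast]

theorem optimal_policy_exponential_stability_general
    {n m : ℕ}
    (f : EuclideanSpace ℝ (Fin n) → EuclideanSpace ℝ (Fin m) → EuclideanSpace ℝ (Fin n))
    (Q : Matrix (Fin n) (Fin n) ℝ) (hQ : Q.PosDef)
    (R : ℝ)
    (r : EuclideanSpace ℝ (Fin n) → EuclideanSpace ℝ (Fin m) → ℝ)
    (lamMin : ℝ) (hlamMin : IsLeast (Set.range hQ.isHermitian.eigenvalues) lamMin)
    (γ : ℝ)
    (ustar : EuclideanSpace ℝ (Fin n) → ℕ → EuclideanSpace ℝ (Fin m))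
    -- (ii): quadratic sandwich bounds
    (aV : ℝ) (haV : 0 < aV)
    (hsandwich : ∀ x : EuclideanSpace ℝ (Fin n),
      lamMin * ‖x‖ ^ 2 ≤ R / (1 - γ) - Vopt f r γ x ∧
        R / (1 - γ) - Vopt f r γ x ≤ aV * ‖x‖ ^ 2)
    -- (iii): strict decrease along every optimal trajectory
    (c : ℝ) (hc0 : 0 < c) (hcaV : c < aV)
    (hdec : ∀ x : EuclideanSpace ℝ (Fin n), ∀ k : ℕ,
      Vopt f r γ (flow f x (ustar x) k) - Vopt f r γ (flow f x (ustar x) (k + 1))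
        ≤ -c * ‖flow f x (ustar x) k‖ ^ 2)
    (lam : ℝ) (hlam : lam = -Real.log (1 - c / aV)) :
    ∀ x : EuclideanSpace ℝ (Fin n), ∀ k : ℕ,
      ‖flow f x (ustar x) k‖ ^ 2 ≤ (aV / lamMin) * ‖x‖ ^ 2 * Real.exp (-lam * k) := by
  intro x k
  obtain ⟨i, hi⟩ := hlamMin.1
  have hlamMin_pos : 0 < lamMin := hi ▸ hQ.eigenvalues_pos i
  have hρ : 0 < 1 - c / aV := sub_pos.2 ((div_lt_one haV).2 hcaV)
  rw [hlam, Real.exp_neg_neg_log_mul_natCast hρ]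
  exact le_div_mul_geom_of_quadratic_lyapunov
    (w := fun k ↦ R / (1 - γ) - Vopt f r γ (flow f x (ustar x) k)) hlamMin_pos haV hc0.le
    hcaV.le (fun _ ↦ (hsandwich _).1) (fun _ ↦ (hsandwich _).2) (fun k ↦ by linarith [hdec x k]) k

/-- Under the dynamic-programming identity along optimal trajectories, the quadratic
sandwich bounds `λ_min(Q)‖x‖² ≤ R/(1−γ) − V_γ(x) ≤ a_V‖x‖²`, and the strict decrease
`V_γ(x_k) − V_γ(x_{k+1}) ≤ −c‖x_k‖²` with `0 < c < a_V`, every optimal trajectory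
satisfies `‖Ψ(k,x,u⋆_x)‖² ≤ (a_V/λ_min(Q))‖x‖² e^{−λk}` with `λ = −ln(1 − c/a_V)`:
the origin is exponentially (hence asymptotically) stable under the optimal policy. -/
theorem optimal_policy_exponential_stability
    {n m : ℕ}
    (f : EuclideanSpace ℝ (Fin n) → EuclideanSpace ℝ (Fin m) → EuclideanSpace ℝ (Fin n))
    (Q : Matrix (Fin n) (Fin n) ℝ) (hQ : Q.PosDef)
    (R : ℝ) (hR : 0 < R)
    (r : EuclideanSpace ℝ (Fin n) → EuclideanSpace ℝ (Fin m) → ℝ)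
    (hr : ∀ x u, r x u = R - x ⬝ᵥ Q.mulVec x)
    (lamMin : ℝ) (hlamMin : IsLeast (Set.range hQ.isHermitian.eigenvalues) lamMin)
    (γ : ℝ) (hγ : γ ∈ Set.Ioo (0 : ℝ) 1)
    -- (i): optimal control sequences attaining the value and the
    -- dynamic-programming identity along every optimal trajectory
    (ustar : EuclideanSpace ℝ (Fin n) → ℕ → EuclideanSpace ℝ (Fin m))
    (hattain : ∀ x, Vopt f r γ x = Jobj f r γ x (ustar x))
    (hDP : ∀ x, ∀ k : ℕ,
      Vopt f r γ (flow f x (ustar x) k)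
        = r (flow f x (ustar x) k) (ustar x k)
          + γ * Vopt f r γ (flow f x (ustar x) (k + 1)))
    -- (ii): quadratic sandwich bounds
    (aV : ℝ) (haV : 0 < aV)
    (hsandwich : ∀ x : EuclideanSpace ℝ (Fin n),
      lamMin * ‖x‖ ^ 2 ≤ R / (1 - γ) - Vopt f r γ x ∧
        R / (1 - γ) - Vopt f r γ x ≤ aV * ‖x‖ ^ 2)
    -- (iii): strict decrease along every optimal trajectory
    (c : ℝ) (hc0 : 0 < c) (hcaV : c < aV)
    (hdec : ∀ x : EuclideanSpace ℝ (Fin n), ∀ k : ℕ,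
      Vopt f r γ (flow f x (ustar x) k) - Vopt f r γ (flow f x (ustar x) (k + 1))
        ≤ -c * ‖flow f x (ustar x) k‖ ^ 2)
    (lam : ℝ) (hlam : lam = -Real.log (1 - c / aV)) :
    ∀ x : EuclideanSpace ℝ (Fin n), ∀ k : ℕ,
      ‖flow f x (ustar x) k‖ ^ 2 ≤ (aV / lamMin) * ‖x‖ ^ 2 * Real.exp (-lam * k) :=
  optimal_policy_exponential_stability_general f Q hQ R r lamMin hlamMin γ ustar aV haV hsandwich c
    hc0 hcaV hdec lam hlam
end
end

section
/- Fix Δ > 0 and a compact set D ⊂ ℝⁿ containing the origin. Assume: (i) f is Lipschitz: ‖f(x,u) − f(y,w)‖ ≤ L_x‖x−y‖ + L_u‖u−w‖ for all x,y,u,w, and f(0, π⋆(0)) = 0 with π⋆(0) = 0; (ii) π⋆ : ℝⁿ → ℝᵐ is a continuous optimal feedback policy, i.e. V_γ^{π⋆} = V_γ; (iii) there is a_V > 0 with λ_min(Q)‖x‖² ≤ R/(1−γ) − V_γ(x) ≤ a_V‖x‖² for all x and all γ ∈ (0,1), and for γ ∈ (γ⋆, 1) with γ⋆ = a_V/(a_V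 + λ_min(Q)) there is c > 0 with V_γ(x) − V_γ(f(x, π⋆(x))) ≤ −c‖x‖²; (iv) the closed-loop value functions depend continuously on the policy: for every η > 0 there is δ > 0 such that sup_{x∈D}‖π_φ(x) − π⋆(x)‖ < δ implies sup_{x∈D}|V_γ^{π_φ}(x) − V_γ(x)| < η; (v) closed-loop trajectories of the policies considered starting in D remain in D. Then there exist ε > 0, γ⋆ ∈ (0,1) and N ∈ ℕ such that for every γ ∈ (γ⋆, 1) and every continuous policy π_φ with π_φ(0) = 0 and sup_{x∈D}‖π_φ(x) − π⋆(x)‖ < ε, every closed-loop trajectory x_{k+1} = f(x_k, π_φ(x_k)) starting at any x ∈ D satisfies ‖x_k‖ ≤ Δ for all k ≥ N (practical stability). -/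
set_option autoImplicit false

open scoped Matrix

noncomputable section

/-- The closed-loop value function of a feedback policy `π`:
`V_γ^π(x₀) = Σ_k γ^k r(x_k, π(x_k))` where `x_{k+1} = f(x_k, π(x_k))`. -/
def Vcl {X U : Type*} (f : X → U → X) (r : X → U → ℝ) (γ : ℝ) (π : X → U) (x : X) : ℝ :=
  ∑' k : ℕ, γ ^ k * r ((fun y => f y (π y))^[k] x) (π ((fun y => f y (π y))^[k] x))

/-!
Along a closed-loop trajectory of `π_φ` the Bellman equation makes the value gap
`W := R/(1-γ) - V_γ^{π_φ}` a discounted Lyapunov function: `γ W(x⁺) = W(x) - xᵀQx`.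
As `W` is `η`-close to the optimal gap, the sandwich bounds give
`λ‖x‖² - η ≤ W(x) ≤ a_V‖x‖² + η`, and with `xᵀQx ≥ λ‖x‖²` this yields
`(a_V + λ) γ W(x⁺) ≤ a_V W(x) + λη`, a contraction exactly when `γ > a_V/(a_V + λ)`.
So `W(x_k)`, hence `λ‖x_k‖²`, is eventually of order `η`, which the closeness `ε` of the policies
makes small compared with `λΔ²`. The trajectories do not depend on the discount, so a single one
serves for every `γ`.
-/

theorem Matrix.IsHermitian.mul_dotProduct_self_le_s5 {n : Type*} [Fintype n] [DecidableEq n]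
    {Q : Matrix n n ℝ} (hQ : Q.IsHermitian) {lam : ℝ}
    (hlam : IsLeast (Set.range hQ.eigenvalues) lam) (x : n → ℝ) :
    lam * (x ⬝ᵥ x) ≤ x ⬝ᵥ Q *ᵥ x := by
  set U : Matrix n n ℝ := (hQ.eigenvectorUnitary : Matrix n n ℝ)
  have hU : U * star U = 1 := Matrix.mem_unitaryGroup_iff.mp hQ.eigenvectorUnitary.2
  have hshift : Q - lam • 1 = U * Matrix.diagonal (fun i => hQ.eigenvalues i - lam) * star U := by
    have hdiag : Matrix.diagonal (fun i => hQ.eigenvalues i - lam)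
        = Matrix.diagonal (RCLike.ofReal ∘ hQ.eigenvalues) - lam • 1 := by
      rw [Matrix.smul_one_eq_diagonal, Matrix.diagonal_sub]
      rfl
    rw [hdiag, Matrix.mul_sub, Matrix.sub_mul,
      ← hQ.spectral_theorem.trans (Unitary.conjStarAlgAut_apply _ _),
      Matrix.mul_smul, Matrix.smul_mul, Matrix.mul_one, hU]
  have hpsd : (Q - lam • 1).PosSemidef := by
    rw [hshift, Matrix.star_eq_conjTranspose]
    have hdiag : (Matrix.diagonal fun i => hQ.eigenvalues i - lam).PosSemidef :=
      .diagonal fun i => sub_nonneg.2 (hlam.2 ⟨i, rfl⟩)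
    exact hdiag.mul_mul_conjTranspose_same U
  have h := hpsd.dotProduct_mulVec_nonneg x
  rw [star_trivial, Matrix.sub_mulVec, Matrix.smul_mulVec, Matrix.one_mulVec, dotProduct_sub,
    dotProduct_smul, smul_eq_mul] at h
  linarith

theorem Matrix.IsHermitian.mul_norm_sq_le {n : Type*} [Fintype n] [DecidableEq n]
    {Q : Matrix n n ℝ} (hQ : Q.IsHermitian) {lam : ℝ}
    (hlam : IsLeast (Set.range hQ.eigenvalues) lam) (x : EuclideanSpace ℝ n) :
    lam * ‖x‖ ^ 2 ≤ x ⬝ᵥ Q *ᵥ x := by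
  have hx : x ⬝ᵥ x = ‖x‖ ^ 2 := by
    rw [← real_inner_self_eq_norm_sq, EuclideanSpace.inner_eq_star_dotProduct]
    simp
  exact hx ▸ hQ.mul_dotProduct_self_le_s5 hlam x

theorem sub_le_pow_mul_sub_of_mul_succ_le {w : ℕ → ℝ} {a ρ b : ℝ} (hρ : 0 ≤ ρ) (hρa : ρ < a)
    (h : ∀ k, a * w (k + 1) ≤ ρ * w k + b) (k : ℕ) :
    w k - b / (a - ρ) ≤ (ρ / a) ^ k * (w 0 - b / (a - ρ)) := by
  have ha : 0 < a := hρ.trans_lt hρa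
  have hfix : a * (b / (a - ρ)) = ρ * (b / (a - ρ)) + b := by
    field_simp [sub_ne_zero.2 hρa.ne']
    ring
  refine le_geom (u := fun k => w k - b / (a - ρ)) (div_nonneg hρ ha.le) k fun j _ => ?_
  rw [div_mul_eq_mul_div, le_div_iff₀ ha]
  linarith [h j]

section ClosedLoop

variable {X U : Type*} (f : X → U → X) (r : X → U → ℝ) (γ : ℝ) (π : X → U)

theorem Vcl_eq_add_mul_Vcl {x : X}
    (h : Summable fun k : ℕ =>
      γ ^ k * r ((fun y => f y (π y))^[k] x) (π ((fun y => f y (π y))^[k] x))) :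
    Vcl f r γ π x = r x (π x) + γ * Vcl f r γ π (f x (π x)) := by
  rw [Vcl, h.tsum_eq_zero_add, Vcl, ← tsum_mul_left]
  simp only [Function.iterate_zero_apply, pow_zero, one_mul, Function.iterate_succ_apply,
    pow_succ', mul_assoc]

theorem summable_closedLoop_of_isCompact [TopologicalSpace X] {D : Set X} (hD : IsCompact D)
    (hrD : ContinuousOn (fun y => r y (π y)) D) (hγ0 : 0 ≤ γ) (hγ1 : γ < 1) {x : X}
    (hx : ∀ k, (fun y => f y (π y))^[k] x ∈ D) :
    Summable fun k : ℕ =>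
      γ ^ k * r ((fun y => f y (π y))^[k] x) (π ((fun y => f y (π y))^[k] x)) := by
  obtain ⟨C, hC⟩ := hD.exists_bound_of_continuousOn hrD
  refine .of_norm_bounded ((summable_geometric_of_lt_one hγ0 hγ1).mul_right C) fun k => ?_
  rw [norm_mul, norm_pow, Real.norm_of_nonneg hγ0]
  gcongr
  exact hC _ (hx k)

theorem mul_value_gap_eq {R : ℝ} {q : X → ℝ} (hr : ∀ x u, r x u = R - q x) (hγ : γ ≠ 1) {x : X}
    (h : Summable fun k : ℕ =>
      γ ^ k * r ((fun y => f y (π y))^[k] x) (π ((fun y => f y (π y))^[k] x))) :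
    γ * (R / (1 - γ) - Vcl f r γ π (f x (π x))) = R / (1 - γ) - Vcl f r γ π x - q x := by
  have : 1 - γ ≠ 0 := sub_ne_zero.2 hγ.symm
  rw [Vcl_eq_add_mul_Vcl f r γ π h, hr]
  field_simp
  ring

end ClosedLoop

theorem mul_norm_sq_iterate_le {X U : Type*} [NormedAddCommGroup X] (f : X → U → X)
    (r : X → U → ℝ) (π : X → U) {V q : X → ℝ} {D : Set X} {R lam aV γ η : ℝ}
    (hr : ∀ x u, r x u = R - q x) (hq : Continuous q) (hlam : 0 < lam)
    (hqlam : ∀ y, lam * ‖y‖ ^ 2 ≤ q y) (haV : 0 < aV) (hγ : γ ∈ Set.Ioo (aV / (aV + lam)) 1)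
    (hD : IsCompact D)
    (hsand : ∀ y ∈ D, lam * ‖y‖ ^ 2 ≤ R / (1 - γ) - V y ∧ R / (1 - γ) - V y ≤ aV * ‖y‖ ^ 2)
    (hclose : ∀ y ∈ D, |Vcl f r γ π y - V y| < η)
    {x : X} (hx : ∀ k, (fun y => f y (π y))^[k] x ∈ D) (k : ℕ) :
    lam * ‖(fun y => f y (π y))^[k] x‖ ^ 2 ≤
      η + lam * η / ((aV + lam) * γ - aV) + (aV / ((aV + lam) * γ)) ^ k * (aV * ‖x‖ ^ 2 + η) := by
  set F := fun y => f y (π y)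
  set W := fun y => R / (1 - γ) - Vcl f r γ π y
  have hγ0 : 0 < γ := (div_pos haV (by linarith)).trans hγ.1
  have hγs : aV < (aV + lam) * γ := (div_lt_iff₀' (by linarith)).1 hγ.1
  have hη : 0 < η := (abs_nonneg _).trans_lt (hclose x (hx 0))
  have hW : ∀ y ∈ D, lam * ‖y‖ ^ 2 - η ≤ W y ∧ W y ≤ aV * ‖y‖ ^ 2 + η := fun y hy => by
    have hVy := abs_lt.1 (hclose y hy)
    have hsy := hsand y hy
    constructor <;> linarith
  have hstep : ∀ j, (aV + lam) * γ * W (F^[j + 1] x) ≤ aV * W (F^[j] x) + lam * η := by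
    intro j
    have hsum := summable_closedLoop_of_isCompact f r γ π hD
      (by simp_rw [hr]; exact (continuous_const.sub hq).continuousOn) hγ0.le hγ.2
      (x := F^[j] x) fun i => by rw [← Function.iterate_add_apply]; exact hx _
    have hgap : γ * W (F (F^[j] x)) = W (F^[j] x) - q (F^[j] x) :=
      mul_value_gap_eq f r γ π hr hγ.2.ne hsum
    have hq_lb := hqlam (F^[j] x)
    have hW_ub := (hW _ (hx j)).2
    have hq_nonneg : 0 ≤ lam * q (F^[j] x) :=
      mul_nonneg hlam.le ((mul_nonneg hlam.le (sq_nonneg _)).trans hq_lb)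
    calc (aV + lam) * γ * W (F^[j + 1] x)
        = (aV + lam) * (W (F^[j] x) - q (F^[j] x)) := by
          rw [Function.iterate_succ_apply', mul_assoc, hgap]
      _ ≤ aV * W (F^[j] x) + lam * η := by
          nlinarith [mul_le_mul_of_nonneg_left hW_ub hlam.le,
            mul_le_mul_of_nonneg_left hq_lb haV.le]
  have hdecay := sub_le_pow_mul_sub_of_mul_succ_le (w := fun j => W (F^[j] x)) haV.le hγs hstep k
  have hκ : 0 ≤ lam * η / ((aV + lam) * γ - aV) := div_nonneg (by positivity) (by linarith)
  have hW_lb := (hW _ (hx k)).1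
  have hW_ub := (hW x (hx 0)).2
  calc lam * ‖F^[k] x‖ ^ 2
      ≤ η + lam * η / ((aV + lam) * γ - aV) + (aV / ((aV + lam) * γ)) ^ k *
          (W x - lam * η / ((aV + lam) * γ - aV)) := by
        simp only [Function.iterate_zero_apply] at hdecay
        linarith
    _ ≤ η + lam * η / ((aV + lam) * γ - aV) + (aV / ((aV + lam) * γ)) ^ k *
          (aV * ‖x‖ ^ 2 + η) := by
        gcongr
        linarith

theorem practical_stability_of_near_optimal_policies_general
    {n m : ℕ}
    (f : EuclideanSpace ℝ (Fin n) → EuclideanSpace ℝ (Fin m) → EuclideanSpace ℝ (Fin n))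
    (Q : Matrix (Fin n) (Fin n) ℝ) (hQ : Q.PosDef)
    (R : ℝ)
    (r : EuclideanSpace ℝ (Fin n) → EuclideanSpace ℝ (Fin m) → ℝ)
    (hr : ∀ x u, r x u = R - x ⬝ᵥ Q.mulVec x)
    (lamMin : ℝ) (hlamMin : IsLeast (Set.range hQ.isHermitian.eigenvalues) lamMin)
    (D : Set (EuclideanSpace ℝ (Fin n))) (hD : IsCompact D)
    (Δ : ℝ) (hΔ : 0 < Δ)
    (πs : EuclideanSpace ℝ (Fin n) → EuclideanSpace ℝ (Fin m))
    -- (iii): quadratic sandwich bounds and strict decrease for `γ > γ⋆`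
    (aV : ℝ) (haV : 0 < aV)
    (hsandwich : ∀ γ ∈ Set.Ioo (0 : ℝ) 1, ∀ x : EuclideanSpace ℝ (Fin n),
      lamMin * ‖x‖ ^ 2 ≤ R / (1 - γ) - Vopt f r γ x ∧
        R / (1 - γ) - Vopt f r γ x ≤ aV * ‖x‖ ^ 2)
    -- (iv): the closed-loop value functions depend continuously on the policy
    (hVcont : ∀ γ ∈ Set.Ioo (aV / (aV + lamMin)) 1, ∀ η > 0, ∃ δ > 0,
      ∀ πφ : EuclideanSpace ℝ (Fin n) → EuclideanSpace ℝ (Fin m),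
        Continuous πφ → πφ 0 = 0 →
        (∀ x ∈ D, ‖πφ x - πs x‖ < δ) →
        ∀ x ∈ D, |Vcl f r γ πφ x - Vopt f r γ x| < η)
    -- (v): closed-loop trajectories of the policies considered remain in `D`
    (hinv : ∀ πφ : EuclideanSpace ℝ (Fin n) → EuclideanSpace ℝ (Fin m),
      Continuous πφ → πφ 0 = 0 →
      ∀ x ∈ D, ∀ k : ℕ, (fun y => f y (πφ y))^[k] x ∈ D) :
    ∃ ε > 0, ∃ γstar ∈ Set.Ioo (0 : ℝ) 1, ∃ N : ℕ,
      ∀ γ ∈ Set.Ioo γstar 1,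
        ∀ πφ : EuclideanSpace ℝ (Fin n) → EuclideanSpace ℝ (Fin m),
          Continuous πφ → πφ 0 = 0 →
          (∀ x ∈ D, ‖πφ x - πs x‖ < ε) →
          ∀ x ∈ D, ∀ k ≥ N, ‖(fun y => f y (πφ y))^[k] x‖ ≤ Δ := by
  have hlam : 0 < lamMin := by
    obtain ⟨⟨i, rfl⟩, -⟩ := hlamMin
    exact hQ.eigenvalues_pos i
  -- this discount makes the contraction rate `aV / (aV + lamMin / 2)` and the limit level `2η`
  set γ₀ := (aV + lamMin / 2) / (aV + lamMin)
  have hγ₀ : γ₀ ∈ Set.Ioo (aV / (aV + lamMin)) 1 :=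
    ⟨(div_lt_div_iff_of_pos_right (by positivity)).2 (by linarith),
      (div_lt_one (by positivity)).2 (by linarith)⟩
  have hrate : (aV + lamMin) * γ₀ = aV + lamMin / 2 := by
    simp only [γ₀]
    field_simp
  set η := lamMin * Δ ^ 2 / 6
  obtain ⟨B, hB⟩ := hD.isBounded.exists_norm_le
  obtain ⟨N, hN⟩ : ∃ N, ∀ k ≥ N, (aV / (aV + lamMin / 2)) ^ k * (aV * B ^ 2 + η) < 3 * η :=
    Filter.eventually_atTop.1 <| ((tendsto_pow_atTop_nhds_zero_of_lt_one (by positivity)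
      ((div_lt_one (by positivity)).2 (by linarith))).mul_const _).eventually
        (gt_mem_nhds (by rw [zero_mul]; positivity))
  obtain ⟨ε, hε, hclose⟩ := hVcont γ₀ hγ₀ η (by positivity)
  refine ⟨ε, hε, aV / (aV + lamMin),
    ⟨by positivity, (div_lt_one (by positivity)).2 (by linarith)⟩, N,
    fun _ _ πφ hcont h0 hπφ x hx k hk => ?_⟩
  have hbound := mul_norm_sq_iterate_le f r πφ hr (by fun_prop) hlam
    (hQ.isHermitian.mul_norm_sq_le hlamMin) haV hγ₀ hD
    (fun y _ => hsandwich γ₀ ⟨hγ₀.1.trans' (by positivity), hγ₀.2⟩ y)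
    (hclose πφ hcont h0 hπφ) (hinv πφ hcont h0 x hx) k
  rw [hrate, add_sub_cancel_left] at hbound
  have hx_le : (aV / (aV + lamMin / 2)) ^ k * (aV * ‖x‖ ^ 2 + η) ≤
      (aV / (aV + lamMin / 2)) ^ k * (aV * B ^ 2 + η) := by
    gcongr
    exact hB x hx
  have hlevel : lamMin * η / (lamMin / 2) = 2 * η := by field_simp
  have hsq : ‖(fun y => f y (πφ y))^[k] x‖ ^ 2 ≤ Δ ^ 2 := by
    refine le_of_mul_le_mul_left ?_ hlam
    linarith [hN k hk, show 6 * η = lamMin * Δ ^ 2 by ring]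
  exact (pow_le_pow_iff_left₀ (norm_nonneg _) hΔ.le two_ne_zero).1 hsq

/-- Practical stability of near-optimal neural policies: under Lipschitz dynamics, an
optimal continuous feedback policy `π⋆` with quadratic value sandwich bounds and strict
value decrease, continuity of closed-loop values in the policy, and forward invariance
of the compact set `D`, there exist `ε > 0`, `γ⋆ ∈ (0,1)` and `N` such that every
continuous policy `π_φ` with `π_φ(0) = 0` that is `ε`-close to `π⋆` on `D` drives every
trajectory starting in `D` into the `Δ`-ball by time `N`, where it remains. -/
theorem practical_stability_of_near_optimal_policies
    {n m : ℕ}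
    (f : EuclideanSpace ℝ (Fin n) → EuclideanSpace ℝ (Fin m) → EuclideanSpace ℝ (Fin n))
    (Q : Matrix (Fin n) (Fin n) ℝ) (hQ : Q.PosDef)
    (R : ℝ) (hR : 0 < R)
    (r : EuclideanSpace ℝ (Fin n) → EuclideanSpace ℝ (Fin m) → ℝ)
    (hr : ∀ x u, r x u = R - x ⬝ᵥ Q.mulVec x)
    (lamMin : ℝ) (hlamMin : IsLeast (Set.range hQ.isHermitian.eigenvalues) lamMin)
    (D : Set (EuclideanSpace ℝ (Fin n))) (hD : IsCompact D)
    (hD0 : (0 : EuclideanSpace ℝ (Fin n)) ∈ D)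
    (Δ : ℝ) (hΔ : 0 < Δ)
    -- (i): Lipschitz dynamics, vanishing at the origin under `π⋆`
    (Lx Lu : ℝ)
    (hLip : ∀ x y : EuclideanSpace ℝ (Fin n), ∀ u w : EuclideanSpace ℝ (Fin m),
      ‖f x u - f y w‖ ≤ Lx * ‖x - y‖ + Lu * ‖u - w‖)
    (πs : EuclideanSpace ℝ (Fin n) → EuclideanSpace ℝ (Fin m))
    (hπs0 : πs 0 = 0) (hf0 : f 0 (πs 0) = 0)
    -- (ii): `π⋆` is a continuous optimal feedback policy
    (hπscont : Continuous πs)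
    (hπsopt : ∀ γ ∈ Set.Ioo (0 : ℝ) 1, ∀ x, Vcl f r γ πs x = Vopt f r γ x)
    -- (iii): quadratic sandwich bounds and strict decrease for `γ > γ⋆`
    (aV : ℝ) (haV : 0 < aV)
    (hsandwich : ∀ γ ∈ Set.Ioo (0 : ℝ) 1, ∀ x : EuclideanSpace ℝ (Fin n),
      lamMin * ‖x‖ ^ 2 ≤ R / (1 - γ) - Vopt f r γ x ∧
        R / (1 - γ) - Vopt f r γ x ≤ aV * ‖x‖ ^ 2)
    (hdec : ∀ γ ∈ Set.Ioo (aV / (aV + lamMin)) 1, ∃ c > 0,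
      ∀ x : EuclideanSpace ℝ (Fin n),
        Vopt f r γ x - Vopt f r γ (f x (πs x)) ≤ -c * ‖x‖ ^ 2)
    -- (iv): the closed-loop value functions depend continuously on the policy
    (hVcont : ∀ γ ∈ Set.Ioo (aV / (aV + lamMin)) 1, ∀ η > 0, ∃ δ > 0,
      ∀ πφ : EuclideanSpace ℝ (Fin n) → EuclideanSpace ℝ (Fin m),
        Continuous πφ → πφ 0 = 0 →
        (∀ x ∈ D, ‖πφ x - πs x‖ < δ) →
        ∀ x ∈ D, |Vcl f r γ πφ x - Vopt f r γ x| < η)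
    -- (v): closed-loop trajectories of the policies considered remain in `D`
    (hinv : ∀ πφ : EuclideanSpace ℝ (Fin n) → EuclideanSpace ℝ (Fin m),
      Continuous πφ → πφ 0 = 0 →
      ∀ x ∈ D, ∀ k : ℕ, (fun y => f y (πφ y))^[k] x ∈ D) :
    ∃ ε > 0, ∃ γstar ∈ Set.Ioo (0 : ℝ) 1, ∃ N : ℕ,
      ∀ γ ∈ Set.Ioo γstar 1,
        ∀ πφ : EuclideanSpace ℝ (Fin n) → EuclideanSpace ℝ (Fin m),
          Continuous πφ → πφ 0 = 0 →
          (∀ x ∈ D, ‖πφ x - πs x‖ < ε) →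
          ∀ x ∈ D, ∀ k ≥ N, ‖(fun y => f y (πφ y))^[k] x‖ ≤ Δ :=
  practical_stability_of_near_optimal_policies_general f Q hQ R r hr lamMin hlamMin D hD Δ hΔ πs aV
    haV hsandwich hVcont hinv
end
end

section
/- Let u be a control sequence and x₀ an initial state whose trajectory x_k = Ψ(k, x₀, u) satisfies x_kᵀQx_k ≤ 1 for all k ≥ 0 (so each per-step reward is nonnegative) and ‖x_k‖ ≤ ε' for all k ≥ N for some N ∈ ℕ and ε' > 0. Then for every γ ∈ (0,1), the discounted objective satisfies J_γ^u(x₀) = Σ_{k=0}^∞ γᵏ (1 − x_kᵀQx_k) ≥ γ^N (1 − λ_max(Q)ε'²)/(1−γ). -/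
/-! Every eigenvalue of `Q` is at most `λ_max`, so `Q ≤ λ_max • 1` in the Loewner order and
`xᵀQx ≤ λ_max ‖x‖²`; hence every reward from step `N` on is at least `1 − λ_max ε'²`. Dropping the
nonnegative first `N` terms leaves a geometric series starting at `γ ^ N`. -/

set_option autoImplicit false

open scoped Matrix

noncomputable section

open scoped MatrixOrder in
theorem Matrix.IsHermitian.dotProduct_mulVec_le_mul_norm_sq {ι : Type*} [Fintype ι] [DecidableEq ι]
    {Q : Matrix ι ι ℝ} (hQ : Q.IsHermitian) {c : ℝ} (h : ∀ i, hQ.eigenvalues i ≤ c)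
    (x : EuclideanSpace ℝ ι) :
    WithLp.ofLp x ⬝ᵥ Q *ᵥ WithLp.ofLp x ≤ c * ‖x‖ ^ 2 := by
  have hle : Q ≤ algebraMap ℝ _ c := le_algebraMap_of_spectrum_le (by
    rw [hQ.spectrum_real_eq_range_eigenvalues]
    rintro _ ⟨i, rfl⟩
    exact h i) hQ
  have := (Matrix.le_iff.mp hle).dotProduct_mulVec_nonneg (WithLp.ofLp x)
  rw [← real_inner_self_eq_norm_sq, EuclideanSpace.inner_eq_star_dotProduct]
  simpa [Matrix.sub_mulVec, Algebra.algebraMap_eq_smul_one, Matrix.smul_mulVec] using this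

theorem div_le_tsum_geometric_mul {γ B c : ℝ} {r : ℕ → ℝ} (N : ℕ) (hγ₀ : 0 ≤ γ) (hγ₁ : γ < 1)
    (hr₀ : ∀ k, 0 ≤ r k) (hrB : ∀ k, r k ≤ B) (hc : ∀ k ≥ N, c ≤ r k) :
    γ ^ N * c / (1 - γ) ≤ ∑' k, γ ^ k * r k := by
  have hgeom := summable_geometric_of_lt_one hγ₀ hγ₁
  have hsum : Summable fun k => γ ^ k * r k :=
    .of_nonneg_of_le (fun k => mul_nonneg (pow_nonneg hγ₀ k) (hr₀ k))
      (fun k => mul_le_mul_of_nonneg_left (hrB k) (pow_nonneg hγ₀ k)) (hgeom.mul_right B)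
  calc γ ^ N * c / (1 - γ) = ∑' k, γ ^ k * (γ ^ N * c) := by
        rw [tsum_mul_right, tsum_geometric_of_lt_one hγ₀ hγ₁, div_eq_inv_mul]
    _ ≤ ∑' k, γ ^ (k + N) * r (k + N) := by
        refine (hgeom.mul_right _).tsum_le_tsum (fun k => ?_) ((summable_nat_add_iff N).mpr hsum)
        rw [pow_add, mul_assoc]
        exact mul_le_mul_of_nonneg_left
          (mul_le_mul_of_nonneg_left (hc _ (Nat.le_add_left N k)) (pow_nonneg hγ₀ N))
          (pow_nonneg hγ₀ k)
    _ ≤ ∑' k, γ ^ k * r k := by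
        rw [← hsum.sum_add_tsum_nat_add N]
        exact le_add_of_nonneg_left
          (Finset.sum_nonneg fun k _ => mul_nonneg (pow_nonneg hγ₀ k) (hr₀ k))

theorem objective_lower_bound_after_entering_ball_general
    {n m : ℕ}
    (f : EuclideanSpace ℝ (Fin n) → EuclideanSpace ℝ (Fin m) → EuclideanSpace ℝ (Fin n))
    (Q : Matrix (Fin n) (Fin n) ℝ) (hQ : Q.PosDef)
    (lamMax : ℝ) (hlamMax : IsGreatest (Set.range hQ.isHermitian.eigenvalues) lamMax)
    (u : ℕ → EuclideanSpace ℝ (Fin m)) (x₀ : EuclideanSpace ℝ (Fin n))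
    (hbdd : ∀ k : ℕ, (WithLp.ofLp (flow f x₀ u k)) ⬝ᵥ Q.mulVec (WithLp.ofLp (flow f x₀ u k)) ≤ 1)
    (N : ℕ) (ε' : ℝ)
    (hin : ∀ k ≥ N, ‖flow f x₀ u k‖ ≤ ε')
    (γ : ℝ) (hγ : γ ∈ Set.Ioo (0 : ℝ) 1) :
    γ ^ N * (1 - lamMax * ε' ^ 2) / (1 - γ)
      ≤ ∑' k : ℕ, γ ^ k * (1 - (WithLp.ofLp (flow f x₀ u k)) ⬝ᵥ Q.mulVec (WithLp.ofLp (flow f x₀ u k))) := by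
  have hquad_nonneg (k : ℕ) :
      0 ≤ (WithLp.ofLp (flow f x₀ u k)) ⬝ᵥ Q.mulVec (WithLp.ofLp (flow f x₀ u k)) := by
    simpa using hQ.posSemidef.dotProduct_mulVec_nonneg (WithLp.ofLp (flow f x₀ u k))
  have hlamMax_nonneg : 0 ≤ lamMax := by
    obtain ⟨i, rfl⟩ := hlamMax.1
    exact (hQ.eigenvalues_pos i).le
  refine div_le_tsum_geometric_mul N hγ.1.le hγ.2 (fun k => sub_nonneg.2 (hbdd k))
    (fun k => sub_le_self 1 (hquad_nonneg k)) fun k hk => sub_le_sub_left ?_ 1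
  calc _ ≤ lamMax * ‖flow f x₀ u k‖ ^ 2 :=
        hQ.isHermitian.dotProduct_mulVec_le_mul_norm_sq (fun i => hlamMax.2 ⟨i, rfl⟩) _
    _ ≤ lamMax * ε' ^ 2 := by gcongr; exact hin k hk

/-- If the per-step rewards `1 − x_kᵀQx_k` are nonnegative along the trajectory and
`‖x_k‖ ≤ ε'` for all `k ≥ N`, then the discounted objective
`J_γ^u(x₀) = Σ_k γ^k (1 − x_kᵀQx_k)` is at least `γ^N (1 − λ_max(Q)ε'²)/(1−γ)`. -/
theorem objective_lower_bound_after_entering_ball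
    {n m : ℕ}
    (f : EuclideanSpace ℝ (Fin n) → EuclideanSpace ℝ (Fin m) → EuclideanSpace ℝ (Fin n))
    (Q : Matrix (Fin n) (Fin n) ℝ) (hQ : Q.PosDef)
    (lamMax : ℝ) (hlamMax : IsGreatest (Set.range hQ.isHermitian.eigenvalues) lamMax)
    (u : ℕ → EuclideanSpace ℝ (Fin m)) (x₀ : EuclideanSpace ℝ (Fin n))
    (hbdd : ∀ k : ℕ, (WithLp.ofLp (flow f x₀ u k)) ⬝ᵥ Q.mulVec (WithLp.ofLp (flow f x₀ u k)) ≤ 1)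
    (N : ℕ) (ε' : ℝ) (hε' : 0 < ε')
    (hin : ∀ k ≥ N, ‖flow f x₀ u k‖ ≤ ε')
    (γ : ℝ) (hγ : γ ∈ Set.Ioo (0 : ℝ) 1) :
    γ ^ N * (1 - lamMax * ε' ^ 2) / (1 - γ)
      ≤ ∑' k : ℕ, γ ^ k * (1 - (WithLp.ofLp (flow f x₀ u k)) ⬝ᵥ Q.mulVec (WithLp.ofLp (flow f x₀ u k))) :=
  objective_lower_bound_after_entering_ball_general f Q hQ lamMax hlamMax u x₀ hbdd N ε' hin γ hγ
end
end
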